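/- For β > 0, the Legendre transform I(z) = sup_{λ∈ℝ} (λz − Λ_∞(λ)) of Λ_∞ satisfies: for |z| < 1, I(z) = z·log( (z e^{−2β} + √(1 + z²(e^{−4β} − 1)))/√(1−z²) ) − log( (e^{β}√(1 + z²(e^{−4β}−1)) + e^{−β}) / (√(1−z²)(e^{β}+e^{−β})) ). -/

import Mathlib

/-!
The maximizer of `l ↦ l z - Λ(l)` is `l₀ = arsinh (z e^{-2β} / √(1 - z²))`, and it is a global
maximizer for an elementary reason. Cauchy–Schwarz with the unit vector `(z, √(1 - z²))` bounds the
square root in the transfer eigenvalue from below by `z e^β sinh l + √(1 - z²) e^{-β}`, with equality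
at `l₀`; so the eigenvalue dominates a positive combination `g` of `e^l`, `e^{-l}`, `1` touching it
at `l₀`, and `g'(l₀) = z g(l₀)`. Termwise `e^t ≥ 1 + t` then gives `g(l) ≥ g(l₀) e^{z (l - l₀)}`.
-/

open Real Finset

noncomputable def Lam (β l : ℝ) : ℝ :=
  Real.log ((Real.exp β * Real.cosh l +
      Real.sqrt (Real.exp (2 * β) * (Real.sinh l) ^ 2 + Real.exp (-(2 * β)))) /
    (Real.exp β + Real.exp (-β)))

theorem sum_mul_exp_mul_exp_le {ι : Type*} (s : Finset ι) {c a : ι → ℝ}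
    (hc : ∀ i ∈ s, 0 ≤ c i) {x₀ z : ℝ}
    (hz : ∑ i ∈ s, c i * a i * exp (a i * x₀) = z * ∑ i ∈ s, c i * exp (a i * x₀)) (x : ℝ) :
    (∑ i ∈ s, c i * exp (a i * x₀)) * exp (z * (x - x₀)) ≤ ∑ i ∈ s, c i * exp (a i * x) := by
  set d := x - x₀
  set e := exp (z * d)
  have hterm : ∀ i ∈ s, c i * exp (a i * x₀) * e * (1 + (a i - z) * d) ≤ c i * exp (a i * x) := by
    intro i hi
    have hsplit : exp (a i * x) = exp (a i * x₀) * e * exp ((a i - z) * d) := by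
      simp only [e, d, ← exp_add]; ring_nf
    have := hc i hi
    rw [hsplit, ← mul_assoc, ← mul_assoc, add_comm 1]
    gcongr
    exact add_one_le_exp _
  have hexpand : ∀ i, c i * exp (a i * x₀) * e * (1 + (a i - z) * d) =
      e * (c i * exp (a i * x₀)) + e * d * (c i * a i * exp (a i * x₀))
        - e * d * z * (c i * exp (a i * x₀)) := fun i => by ring
  calc (∑ i ∈ s, c i * exp (a i * x₀)) * e
      = ∑ i ∈ s, c i * exp (a i * x₀) * e * (1 + (a i - z) * d) := by
        simp only [hexpand, sum_sub_distrib, sum_add_distrib, ← mul_sum, hz]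
        ring
    _ ≤ ∑ i ∈ s, c i * exp (a i * x) := sum_le_sum hterm

theorem cosh_sinh_tangent {a b r z l₀ : ℝ} (hab : |b| ≤ a) (hr : 0 ≤ r)
    (h : a * sinh l₀ + b * cosh l₀ = z * (a * cosh l₀ + b * sinh l₀ + r)) (l : ℝ) :
    (a * cosh l₀ + b * sinh l₀ + r) * exp (z * (l - l₀)) ≤ a * cosh l + b * sinh l + r := by
  set c : Fin 3 → ℝ := ![(a + b) / 2, (a - b) / 2, r]
  set s : Fin 3 → ℝ := ![1, -1, 0]
  have hc : ∀ i ∈ univ, 0 ≤ c i := by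
    obtain ⟨hb₁, hb₂⟩ := abs_le.1 hab
    intro i _
    fin_cases i <;> simp only [c, Fin.zero_eta, Fin.mk_one, Fin.reduceFinMk, Fin.isValue,
      Matrix.cons_val_zero, Matrix.cons_val_one, Matrix.cons_val] <;> linarith
  have hsum : ∀ x, ∑ i, c i * exp (s i * x) = a * cosh x + b * sinh x + r := by
    intro x
    simp only [c, s, Fin.sum_univ_three, Fin.isValue, Matrix.cons_val_zero, Matrix.cons_val_one,
      Matrix.cons_val, cosh_eq, sinh_eq, one_mul, neg_mul, zero_mul, exp_zero]
    ring
  have hderiv : ∀ x, ∑ i, c i * s i * exp (s i * x) = a * sinh x + b * cosh x := by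
    intro x
    simp only [c, s, Fin.sum_univ_three, Fin.isValue, Matrix.cons_val_zero, Matrix.cons_val_one,
      Matrix.cons_val, cosh_eq, sinh_eq, one_mul, neg_mul, zero_mul, mul_zero]
    ring
  have := sum_mul_exp_mul_exp_le univ hc (x₀ := l₀) (z := z) (by rw [hderiv, hsum, h]) l
  rwa [hsum, hsum] at this

theorem sqrt_one_add_div_sq {q : ℝ} (hq : 0 < q) (x : ℝ) :
    √(1 + (x / q) ^ 2) = √(q ^ 2 + x ^ 2) / q := by
  rw [sqrt_eq_iff_eq_sq (by positivity) (by positivity), div_pow, div_pow, sq_sqrt (by positivity)]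
  field_simp

theorem mul_add_mul_le_sqrt_sq_add_sq {u v : ℝ} (huv : u ^ 2 + v ^ 2 = 1) (x y : ℝ) :
    u * x + v * y ≤ √(x ^ 2 + y ^ 2) :=
  (le_abs_self _).trans (abs_le_sqrt (by nlinarith [sq_nonneg (v * x - u * y)]))

/-- The largest eigenvalue of the transfer matrix `!![e^{β+l}, e^{-β}; e^{-β}, e^{β-l}]`. -/
noncomputable def transferEigenvalue (β l : ℝ) : ℝ :=
  exp β * cosh l + √(exp (2 * β) * sinh l ^ 2 + exp (-(2 * β)))

theorem Lam_eq_log_transferEigenvalue (β l : ℝ) :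
    Lam β l = log (transferEigenvalue β l / (exp β + exp (-β))) := rfl

theorem transferEigenvalue_pos (β l : ℝ) : 0 < transferEigenvalue β l := by
  unfold transferEigenvalue; positivity

/-- The solution `l` of `Λ'(l) = z`. -/
noncomputable def legendreMaximizer (β z : ℝ) : ℝ := arsinh (z * exp (-(2 * β)) / √(1 - z ^ 2))

section
variable {β z : ℝ}

theorem one_add_sq_mul_exp_sub_one (β z : ℝ) :
    1 + z ^ 2 * (exp (-(4 * β)) - 1) = (1 - z ^ 2) + (z * exp (-(2 * β))) ^ 2 := by
  rw [mul_pow, ← exp_nat_mul]; ring_nf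

theorem sqrt_one_sub_sq_pos (hz : |z| < 1) : 0 < √(1 - z ^ 2) :=
  sqrt_pos.2 (by nlinarith [sq_abs z, abs_nonneg z])

theorem sinh_legendreMaximizer :
    sinh (legendreMaximizer β z) = z * exp (-(2 * β)) / √(1 - z ^ 2) :=
  sinh_arsinh _

theorem cosh_legendreMaximizer (hz : |z| < 1) :
    cosh (legendreMaximizer β z) =
      √(1 + z ^ 2 * (exp (-(4 * β)) - 1)) / √(1 - z ^ 2) := by
  have hq := sqrt_one_sub_sq_pos hz
  have hq2 : √(1 - z ^ 2) ^ 2 = 1 - z ^ 2 := sq_sqrt (by nlinarith [sq_abs z, abs_nonneg z])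
  rw [legendreMaximizer, cosh_arsinh, sqrt_one_add_div_sq hq, hq2, one_add_sq_mul_exp_sub_one]

theorem exp_legendreMaximizer (hz : |z| < 1) :
    exp (legendreMaximizer β z) =
      (z * exp (-(2 * β)) + √(1 + z ^ 2 * (exp (-(4 * β)) - 1))) / √(1 - z ^ 2) := by
  rw [← cosh_add_sinh, cosh_legendreMaximizer hz, sinh_legendreMaximizer, ← add_div,
    add_comm]

theorem transferEigenvalue_legendreMaximizer (hz : |z| < 1) :
    transferEigenvalue β (legendreMaximizer β z) =
      (exp β * √(1 + z ^ 2 * (exp (-(4 * β)) - 1)) + exp (-β)) / √(1 - z ^ 2) := by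
  have hq := sqrt_one_sub_sq_pos hz
  have hq2 : √(1 - z ^ 2) ^ 2 = 1 - z ^ 2 := sq_sqrt (by nlinarith [sq_abs z, abs_nonneg z])
  have hradical : √(exp (2 * β) * (z * exp (-(2 * β)) / √(1 - z ^ 2)) ^ 2 + exp (-(2 * β))) =
      exp (-β) / √(1 - z ^ 2) := by
    have h₁ : exp (2 * β) * exp (-(2 * β)) = 1 := by rw [← exp_add]; simp
    have h₂ : exp (-β) ^ 2 = exp (-(2 * β)) := by rw [sq, ← exp_add]; ring_nf
    have hz2 : 1 - z ^ 2 ≠ 0 := by rw [← hq2]; positivity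
    rw [sqrt_eq_iff_eq_sq (by positivity) (by positivity), div_pow, div_pow, hq2, mul_pow, h₂]
    field_simp
    linear_combination z ^ 2 * h₁
  rw [transferEigenvalue, cosh_legendreMaximizer hz, sinh_legendreMaximizer, hradical]
  ring

theorem transferEigenvalue_mul_exp_le (hz : |z| < 1) (l : ℝ) :
    transferEigenvalue β (legendreMaximizer β z) * exp (z * (l - legendreMaximizer β z)) ≤
      transferEigenvalue β l := by
  have hq := sqrt_one_sub_sq_pos hz
  have hq2 : √(1 - z ^ 2) ^ 2 = 1 - z ^ 2 := sq_sqrt (by nlinarith [sq_abs z, abs_nonneg z])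
  have hexp : exp β * exp (-(2 * β)) = exp (-β) := by rw [← exp_add]; ring_nf
  have hab : |z * exp β| ≤ exp β := by
    rw [abs_mul, abs_exp]; exact mul_le_of_le_one_left (exp_pos β).le hz.le
  have hslope : exp β * sinh (legendreMaximizer β z) + z * exp β * cosh (legendreMaximizer β z) =
      z * (exp β * cosh (legendreMaximizer β z) + z * exp β * sinh (legendreMaximizer β z) +
        √(1 - z ^ 2) * exp (-β)) := by
    rw [cosh_legendreMaximizer hz, sinh_legendreMaximizer]
    field_simp
    linear_combination (z - z ^ 3) * hexp - z * exp (-β) * hq2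
  have hvalue : exp β * cosh (legendreMaximizer β z) + z * exp β * sinh (legendreMaximizer β z) +
      √(1 - z ^ 2) * exp (-β) = transferEigenvalue β (legendreMaximizer β z) := by
    rw [transferEigenvalue_legendreMaximizer hz, cosh_legendreMaximizer hz, sinh_legendreMaximizer]
    set a := exp (-(2 * β))
    field_simp
    linear_combination z ^ 2 * hexp + exp (-β) * hq2
  have hsq : (exp β * sinh l) ^ 2 + exp (-β) ^ 2 = exp (2 * β) * sinh l ^ 2 + exp (-(2 * β)) := by
    rw [mul_pow, ← exp_nat_mul, ← exp_nat_mul]; ring_nf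
  calc transferEigenvalue β (legendreMaximizer β z) * exp (z * (l - legendreMaximizer β z))
      ≤ exp β * cosh l + z * exp β * sinh l + √(1 - z ^ 2) * exp (-β) := by
        rw [← hvalue]; exact cosh_sinh_tangent hab (by positivity) hslope l
    _ ≤ transferEigenvalue β l := by
        have := mul_add_mul_le_sqrt_sq_add_sq (u := z) (v := √(1 - z ^ 2)) (by rw [hq2]; ring)
          (exp β * sinh l) (exp (-β))
        rw [transferEigenvalue, ← hsq]
        linarith

theorem Lam_legendreMaximizer_add_le (hz : |z| < 1) (l : ℝ) :
    Lam β (legendreMaximizer β z) + z * (l - legendreMaximizer β z) ≤ Lam β l := by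
  have hc : 0 < exp β + exp (-β) := by positivity
  have hpos := transferEigenvalue_pos β (legendreMaximizer β z)
  calc Lam β (legendreMaximizer β z) + z * (l - legendreMaximizer β z)
      = log (transferEigenvalue β (legendreMaximizer β z) *
          exp (z * (l - legendreMaximizer β z)) / (exp β + exp (-β))) := by
        rw [Lam_eq_log_transferEigenvalue, mul_div_right_comm, log_mul (by positivity) (by positivity), log_exp]
    _ ≤ Lam β l := by
        rw [Lam_eq_log_transferEigenvalue]
        gcongr
        exact transferEigenvalue_mul_exp_le hz l

end

theorem stmt6_general (β z : ℝ) (hz : |z| < 1) :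
    (⨆ l : ℝ, (l * z - Lam β l)) =
      z * Real.log ((z * Real.exp (-(2 * β)) +
            Real.sqrt (1 + z ^ 2 * (Real.exp (-(4 * β)) - 1))) /
          Real.sqrt (1 - z ^ 2)) -
      Real.log ((Real.exp β * Real.sqrt (1 + z ^ 2 * (Real.exp (-(4 * β)) - 1)) +
            Real.exp (-β)) /
          (Real.sqrt (1 - z ^ 2) * (Real.exp β + Real.exp (-β)))) := by
  set l₀ := legendreMaximizer β z
  have hmax : ∀ l, l * z - Lam β l ≤ l₀ * z - Lam β l₀ := fun l => by
    linarith [Lam_legendreMaximizer_add_le (β := β) hz l]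
  have hLam : Lam β l₀ = log ((exp β * √(1 + z ^ 2 * (exp (-(4 * β)) - 1)) + exp (-β)) /
      (√(1 - z ^ 2) * (exp β + exp (-β)))) := by
    rw [Lam_eq_log_transferEigenvalue, transferEigenvalue_legendreMaximizer hz, div_div]
  rw [le_antisymm (ciSup_le hmax) (le_ciSup ⟨_, Set.forall_mem_range.2 hmax⟩ l₀), hLam,
    ← exp_legendreMaximizer hz, log_exp, mul_comm z]

/-- explicit formula for the Legendre transform of `Λ_∞` on `|z| < 1`. -/
theorem stmt6 (β z : ℝ) (hβ : 0 < β) (hz : |z| < 1) :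
    (⨆ l : ℝ, (l * z - Lam β l)) =
      z * Real.log ((z * Real.exp (-(2 * β)) +
            Real.sqrt (1 + z ^ 2 * (Real.exp (-(4 * β)) - 1))) /
          Real.sqrt (1 - z ^ 2)) -
      Real.log ((Real.exp β * Real.sqrt (1 + z ^ 2 * (Real.exp (-(4 * β)) - 1)) +
            Real.exp (-β)) /
          (Real.sqrt (1 - z ^ 2) * (Real.exp β + Real.exp (-β)))) :=
  stmt6_general β z hz
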